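/- arXiv:0802.4304 — 2 statements merged into one kernel-verified Lean document; each statement's English description precedes it below -/
import Mathlib

section
/- Let G act on a uniform space X. If the action has small scale bounded orbits (for each entourage E there is an entourage F such that the orbits of G_F acting on X are E-bounded), then the action is small scale uniformly equicontinuous: for each entourage E there is an entourage F such that F ⊂ g⁻¹(E) for every g ∈ G_F. -/
open scoped Uniformity

/-- Symmetric relation (as in Mathlib of December 2024). -/
def SymmetricRel {α : Type*} (V : Set (α × α)) : Prop :=
  Prod.swap ⁻¹' V = V

/-- An `E`-chain: consecutive members of the list are `E`-related. -/
def ChainIn {α : Type*} (E : Set (α × α)) (c : List α) : Prop :=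
  c.Chain' fun a b => (a, b) ∈ E

/-- The image `f(E)` of a relation under a map. -/
def imgRel {α β : Type*} (f : α → β) (E : Set (α × α)) : Set (β × β) :=
  Prod.map f f '' E

/-- The orbit projection `p : X → X/G`. -/
def proj (G X : Type*) [Group G] [MulAction G X] :
    X → Quotient (MulAction.orbitRel G X) :=
  Quotient.mk (MulAction.orbitRel G X)

/-- `G_F`: the subgroup of `G` generated by `S_F = {h | (x, h • x) ∈ F for some x}`. -/
def GF (G : Type*) {X : Type*} [Group G] [MulAction G X] (F : Set (X × X)) : Subgroup G :=
  Subgroup.closure {h : G | ∃ x : X, (x, h • x) ∈ F}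

/-- Chain lifting property for `f : X → Y`: for every (symmetric) entourage `E` of `X`
there is an entourage `F` such that every `f(F)`-chain starting at `f x₀` lifts to an
`E`-chain starting at `x₀`. -/
def HasChainLifting {X Y : Type*} [UniformSpace X] (f : X → Y) : Prop :=
  ∀ E ∈ 𝓤 X, SymmetricRel E → ∃ F ∈ 𝓤 X, SymmetricRel F ∧
    ∀ (x₀ : X) (d : List Y), ChainIn (imgRel f F) d → d.head? = some (f x₀) →
      ∃ c : List X, ChainIn E c ∧ c.head? = some x₀ ∧ c.map f = d

/-- Uniqueness of chain lifts: there is an entourage `F` such that two `F`-chains with the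
same origin and the same image are equal. -/
def HasUniqueChainLifts {X Y : Type*} [UniformSpace X] (f : X → Y) : Prop :=
  ∃ F ∈ 𝓤 X, SymmetricRel F ∧
    ∀ α β : List X, ChainIn F α → ChainIn F β →
      α.head? = β.head? → α.map f = β.map f → α = β

/-- Approximate uniqueness of chain lifts: for every entourage `E` there is an entourage `F`
such that two `F`-chains with the same origin and the same image are `E`-close. -/
def HasApproxUniqueChainLifts {X Y : Type*} [UniformSpace X] (f : X → Y) : Prop :=
  ∀ E ∈ 𝓤 X, SymmetricRel E → ∃ F ∈ 𝓤 X, SymmetricRel F ∧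
    ∀ α β : List X, ChainIn F α → ChainIn F β →
      α.head? = β.head? → α.map f = β.map f →
        List.Forall₂ (fun a b => (a, b) ∈ E) α β

/-- Neutral action. -/
def Neutral (G X : Type*) [Group G] [MulAction G X] [UniformSpace X] : Prop :=
  ∀ E ∈ 𝓤 X, SymmetricRel E → ∃ F ∈ 𝓤 X, SymmetricRel F ∧
    ∀ (x y : X) (h : G), (x, h • y) ∈ F → ∃ g : G, (g • x, y) ∈ E

/-- Uniformly properly discontinuous action. -/
def UnifProperlyDiscontinuous (G X : Type*) [Group G] [MulAction G X] [UniformSpace X] : Prop :=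
  ∃ E ∈ 𝓤 X, SymmetricRel E ∧ ∀ (x : X) (g : G), (x, g • x) ∈ E → g = 1

/-- Equicontinuous action. -/
def EquicontinuousAction (G X : Type*) [Group G] [MulAction G X] [UniformSpace X] : Prop :=
  ∀ E ∈ 𝓤 X, ∃ F ∈ 𝓤 X, ∀ (g : G) (x y : X), (x, y) ∈ F → (g • x, g • y) ∈ E

/-- Small scale uniformly continuous action. -/
def SSUnifCont (G X : Type*) [Group G] [MulAction G X] [UniformSpace X] : Prop :=
  ∀ E ∈ 𝓤 X, SymmetricRel E → ∃ F ∈ 𝓤 X, SymmetricRel F ∧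
    ∀ g ∈ GF G F, {q : X × X | (g • q.1, g • q.2) ∈ E} ∈ 𝓤 X

/-- Small scale uniformly equicontinuous action. -/
def SSUnifEquicont (G X : Type*) [Group G] [MulAction G X] [UniformSpace X] : Prop :=
  ∀ E ∈ 𝓤 X, SymmetricRel E → ∃ F ∈ 𝓤 X, SymmetricRel F ∧
    ∀ g ∈ GF G F, ∀ x y : X, (x, y) ∈ F → (g • x, g • y) ∈ E

/-- Small scale bounded orbits: the orbits of `G_F` are `E`-bounded. -/
def SSBoundedOrbits (G X : Type*) [Group G] [MulAction G X] [UniformSpace X] : Prop :=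
  ∀ E ∈ 𝓤 X, SymmetricRel E → ∃ F ∈ 𝓤 X, SymmetricRel F ∧
    ∀ x : X, ∀ g ∈ GF G F, ∀ g' ∈ GF G F, (g • x, g' • x) ∈ E

/-- Chain connected uniform space. -/
def ChainConnectedU (X : Type*) [UniformSpace X] : Prop :=
  ∀ E ∈ 𝓤 X, SymmetricRel E → ∀ x y : X,
    ∃ c : List X, ChainIn E c ∧ c.head? = some x ∧ c.getLast? = some y

/-! Take a symmetric entourage `D` with `D ○ D ○ D ⊆ E` and `F` whose `G_F`-orbits are
`D`-bounded. Every `g ∈ G_F` moves each point by at most `D` (compare `g • x` with `1 • x`),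
so for `(x, y) ∈ D` the points `g • x, x, y, g • y` form a `D`-chain: the entourage `F ∩ D`
works. -/

open scoped SetRel

theorem SymmetricRel.of_isSymm {α : Type*} {V : SetRel α α} (hV : V.IsSymm) :
    SymmetricRel V :=
  Set.ext fun _ => ⟨hV.symm _ _, hV.symm _ _⟩

theorem SymmetricRel.inter {α : Type*} {U V : Set (α × α)} (hU : SymmetricRel U)
    (hV : SymmetricRel V) : SymmetricRel (U ∩ V) := by
  rw [SymmetricRel, Set.preimage_inter, hU, hV]

theorem GF_mono (G : Type*) {X : Type*} [Group G] [MulAction G X] {F F' : Set (X × X)}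
    (h : F ⊆ F') : GF G F ≤ GF G F' :=
  Subgroup.closure_mono fun _ ⟨x, hx⟩ => ⟨x, h hx⟩

theorem smul_mem_of_forall_smul_mem {G X : Type*} [SMul G X] {D E : SetRel X X}
    (hD : D.IsSymm) (hDE : D ○ D ○ D ⊆ E) {g : G} (hg : ∀ z, (g • z, z) ∈ D) {x y : X}
    (hxy : (x, y) ∈ D) : (g • x, g • y) ∈ E :=
  hDE ⟨y, ⟨x, hg x, hxy⟩, hD.symm _ _ (hg y)⟩

/-- Small scale bounded orbits implies small scale uniform equicontinuity. -/
theorem stmt4 (G X : Type*) [Group G] [MulAction G X] [UniformSpace X]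
    (h : SSBoundedOrbits G X) : SSUnifEquicont G X := by
  intro E hE _
  obtain ⟨D, hD, hDsymm, hDE⟩ := comp_comp_symm_mem_uniformity_sets hE
  obtain ⟨F, hF, hFsymm, hbounded⟩ := h D hD (.of_isSymm hDsymm)
  refine ⟨F ∩ D, Filter.inter_mem hF hD, hFsymm.inter (.of_isSymm hDsymm),
    fun g hg x y hxy => ?_⟩
  have hgF : g ∈ GF G F := GF_mono G Set.inter_subset_left hg
  refine smul_mem_of_forall_smul_mem hDsymm hDE (fun z => ?_) hxy.2
  simpa using hbounded z g hgF 1 (one_mem _)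
end

section
/- Let G act on a uniform space X. The projection p: X → X/G is a uniform covering map if and only if the action is neutral and there exists an entourage E₀ of X such that (x, g·x) ∈ E₀ implies g·x = x. -/
open scoped Uniformity

/-!
Both halves of a uniform covering map reduce to statements about single steps. Chains are
lifted one step at a time, so chain lifting amounts to lifting single `f(F)`-steps to
`E`-steps, and for the orbit projection this is neutrality. Two `F`-chains with the same
origin and image agree as soon as `F ○ F` is transverse to `f` (meets no fibre in two
points), and conversely the uniqueness entourage is itself transverse; for the orbit
projection, transversality of `E₀` says exactly that `(x, g • x) ∈ E₀` forces `g • x = x`.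
-/

theorem SymmetricRel.mk_mem_comm {α : Type*} {V : Set (α × α)} (hV : SymmetricRel V)
    {x y : α} : (x, y) ∈ V ↔ (y, x) ∈ V :=
  (Set.ext_iff.1 hV (x, y)).symm

theorem symmetricRel_of_isSymm {α : Type*} (V : SetRel α α) [V.IsSymm] : SymmetricRel V :=
  Set.ext fun _ => ⟨fun h => SetRel.symm V h, fun h => SetRel.symm V h⟩

section Chains

variable {X Y : Type*} {f : X → Y}

theorem chainIn_singleton (E : Set (X × X)) (a : X) : ChainIn E [a] :=
  List.isChain_singleton a

theorem chainIn_cons_cons {E : Set (X × X)} {a b : X} {l : List X} :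
    ChainIn E (a :: b :: l) ↔ (a, b) ∈ E ∧ ChainIn E (b :: l) :=
  List.isChain_cons_cons

theorem exists_chainIn_lift {E : Set (X × X)} {R : Set (Y × Y)}
    (hstep : ∀ (x : X) (q : Y), (f x, q) ∈ R → ∃ x', (x, x') ∈ E ∧ f x' = q) :
    ∀ (t : List Y) (x₀ : X), ChainIn R (f x₀ :: t) →
      ∃ c : List X, ChainIn E (x₀ :: c) ∧ c.map f = t
  | [], x₀, _ => ⟨[], chainIn_singleton E x₀, rfl⟩
  | q :: t, x₀, hchain => by
    rw [chainIn_cons_cons] at hchain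
    obtain ⟨x₁, hx₀x₁, rfl⟩ := hstep x₀ q hchain.1
    obtain ⟨c, hc, hct⟩ := exists_chainIn_lift hstep t x₁ hchain.2
    exact ⟨x₁ :: c, chainIn_cons_cons.2 ⟨hx₀x₁, hc⟩, by rw [List.map_cons, hct]⟩

theorem eq_of_chainIn_of_map_eq {F : Set (X × X)}
    (hF : ∀ ⦃a b c : X⦄, (a, b) ∈ F → (a, c) ∈ F → f b = f c → b = c) :
    ∀ (α β : List X) (x : X), ChainIn F (x :: α) → ChainIn F (x :: β) →
      α.map f = β.map f → α = β
  | [], [], _, _, _, _ => rfl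
  | a :: α, b :: β, x, hα, hβ, hmap => by
    rw [chainIn_cons_cons] at hα hβ
    simp only [List.map_cons, List.cons.injEq] at hmap
    obtain rfl := hF hα.1 hβ.1 hmap.1
    rw [eq_of_chainIn_of_map_eq hF α β a hα.2 hβ.2 hmap.2]
  | [], _ :: _, _, _, _, hmap | _ :: _, [], _, _, _, hmap => by simp at hmap

end Chains

section UniformLifting

variable {X Y : Type*} [UniformSpace X] {f : X → Y}

def HasStepLifting (f : X → Y) : Prop :=
  ∀ E ∈ 𝓤 X, SymmetricRel E → ∃ F ∈ 𝓤 X, SymmetricRel F ∧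
    ∀ (x : X) (q : Y), (f x, q) ∈ imgRel f F → ∃ x', (x, x') ∈ E ∧ f x' = q

def Transverse (f : X → Y) (E : Set (X × X)) : Prop :=
  ∀ ⦃x y : X⦄, (x, y) ∈ E → f x = f y → x = y

theorem hasChainLifting_iff_hasStepLifting : HasChainLifting f ↔ HasStepLifting f := by
  refine forall₂_congr fun E _ => imp_congr_right fun _ => exists_congr fun F =>
    and_congr_right fun _ => and_congr_right fun _ => ⟨fun hlift x q hxq => ?_, fun hstep => ?_⟩
  · obtain ⟨c, hc, hhead, hmap⟩ :=
      hlift x [f x, q] (chainIn_cons_cons.2 ⟨hxq, chainIn_singleton _ q⟩) rfl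
    obtain ⟨x', rfl, rfl⟩ : ∃ x', c = [x, x'] ∧ f x' = q := by
      rcases c with _ | ⟨a, _ | ⟨x', _ | ⟨_, _⟩⟩⟩ <;> simp_all
    exact ⟨_, (chainIn_cons_cons.1 hc).1, rfl⟩
  · intro x₀ d hd hhead
    obtain ⟨t, rfl⟩ : ∃ t, d = f x₀ :: t := by
      rcases d with _ | ⟨q, t⟩ <;> simp_all
    obtain ⟨c, hc, rfl⟩ := exists_chainIn_lift hstep t x₀ hd
    exact ⟨x₀ :: c, hc, rfl, rfl⟩

theorem hasUniqueChainLifts_iff_exists_transverse :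
    HasUniqueChainLifts f ↔ ∃ E ∈ 𝓤 X, SymmetricRel E ∧ Transverse f E := by
  constructor
  · rintro ⟨F, hF, hFsymm, huniq⟩
    refine ⟨F, hF, hFsymm, fun x y hxy hfxy => ?_⟩
    have hxx := chainIn_cons_cons.2 ⟨refl_mem_uniformity hF, chainIn_singleton F x⟩
    have hxy := chainIn_cons_cons.2 ⟨hxy, chainIn_singleton F y⟩
    simpa using huniq [x, x] [x, y] hxx hxy rfl (by simp [hfxy])
  · rintro ⟨E, hE, -, htrans⟩
    obtain ⟨F, hF, hFsymm, hFE⟩ := comp_symm_mem_uniformity_sets hE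
    refine ⟨F, hF, symmetricRel_of_isSymm F, fun α β hα hβ hhead hmap => ?_⟩
    have hF : ∀ ⦃a b c : X⦄, (a, b) ∈ F → (a, c) ∈ F → f b = f c → b = c :=
      fun a b c hab hac => htrans (hFE ⟨a, SetRel.symm F hab, hac⟩)
    rcases α with _ | ⟨a, α⟩ <;> rcases β with _ | ⟨b, β⟩ <;> simp_all
    exact eq_of_chainIn_of_map_eq hF α β b hα hβ hmap

end UniformLifting

section OrbitProjection

variable {G X : Type*} [Group G] [MulAction G X]

theorem proj_eq_iff {a b : X} : proj G X a = proj G X b ↔ ∃ g : G, g • b = a :=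
  Quotient.eq.trans MulAction.mem_orbit_iff

@[simp]
theorem proj_smul (g : G) (x : X) : proj G X (g • x) = proj G X x :=
  proj_eq_iff.2 ⟨g, rfl⟩

theorem transverse_proj_iff {E : Set (X × X)} :
    Transverse (proj G X) E ↔ ∀ (x : X) (g : G), (x, g • x) ∈ E → g • x = x := by
  refine ⟨fun htrans x g hx => (htrans hx (proj_smul g x).symm).symm, fun h x y hxy hpxy => ?_⟩
  obtain ⟨g, rfl⟩ := proj_eq_iff.1 hpxy.symm
  exact (h x g hxy).symm

variable [UniformSpace X]

theorem hasStepLifting_proj_iff_neutral : HasStepLifting (proj G X) ↔ Neutral G X := by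
  refine forall₂_congr fun E _ => forall_congr' fun hEsymm => exists_congr fun F =>
    and_congr_right fun _ => and_congr_right fun hFsymm => ⟨fun hstep x y h hxy => ?_, ?_⟩
  · obtain ⟨y', hyy', hy'x⟩ :=
      hstep y (proj G X x) ⟨(h • y, x), hFsymm.mk_mem_comm.1 hxy, by simp⟩
    obtain ⟨g, rfl⟩ := proj_eq_iff.1 hy'x
    exact ⟨g, hEsymm.mk_mem_comm.1 hyy'⟩
  · rintro hneutral x q ⟨⟨a, b⟩, hab, hq⟩
    simp only [Prod.map, Prod.mk.injEq] at hq
    obtain ⟨h, rfl⟩ := proj_eq_iff.1 hq.1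
    obtain ⟨g, hgb⟩ := hneutral b x h (hFsymm.mk_mem_comm.1 hab)
    exact ⟨g • b, hEsymm.mk_mem_comm.1 hgb, by simp [← hq.2]⟩

end OrbitProjection

/-- The projection `p : X → X/G` is a uniform covering map iff the action is neutral and
there is an entourage `E₀` with `(x, g•x) ∈ E₀ → g•x = x`. -/
theorem stmt17 (G X : Type*) [Group G] [MulAction G X] [UniformSpace X] :
    (HasChainLifting (proj G X) ∧ HasUniqueChainLifts (proj G X)) ↔
      (Neutral G X ∧ ∃ E₀ ∈ 𝓤 X, SymmetricRel E₀ ∧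
        ∀ (x : X) (g : G), (x, g • x) ∈ E₀ → g • x = x) := by
  simp only [hasChainLifting_iff_hasStepLifting, hasStepLifting_proj_iff_neutral,
    hasUniqueChainLifts_iff_exists_transverse, transverse_proj_iff]
end
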